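/- Let A = ⊕_{n∈ℤ} A_n be a noetherian ℤ-graded commutative ring. Then A is a finitely generated A_0-algebra. -/

import Mathlib

/-!
Since `A` is noetherian, the ideals generated by the homogeneous elements of positive,
resp. negative, degree are already generated by those of degree in `(0, D]`, resp. `[-D, 0)`,
for some `D`; and each ideal `A_m A` is generated by finitely many elements of `A_m`, which then
generate `A_m` as an `A₀`-module. Let `S` be the `A₀`-algebra generated by these finitely many
elements for `|m| ≤ D`. An element of `A_n` with `n > D` is a sum `∑ rᵢ xᵢ` with
`xᵢ ∈ A_{mᵢ}`, `0 < mᵢ ≤ D` and `rᵢ ∈ A_{n - mᵢ}`, where `|n - mᵢ| < |n|`; symmetrically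
for `n < -D`. By induction on `|n|`, every `A_n` lies in `S`.
-/

variable {A : Type*} [CommRing A]
variable (𝒜 : ℤ → AddSubgroup A) [GradedRing 𝒜]

/-- The degree-zero subring `A₀` acts on `A` by multiplication, making `A` an
`A₀`-algebra. -/
instance gradeZeroAlgebra : Algebra (𝒜 0) A :=
  RingHom.toAlgebra
    { toFun := Subtype.val, map_one' := rfl, map_mul' := fun _ _ => rfl,
      map_zero' := rfl, map_add' := fun _ _ => rfl }

theorem Ideal.exists_span_iUnion_le_of_monotone {R : Type*} [CommRing R] [IsNoetherianRing R]
    {s : ℕ → Set R} (hs : Monotone s) :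
    ∃ n, ∀ m, n ≤ m → Ideal.span (⋃ k, s k) ≤ Ideal.span (s m) := by
  let f : ℕ →o Ideal R := ⟨fun k => Ideal.span (s k), fun _ _ h => Ideal.span_mono (hs h)⟩
  obtain ⟨n, hn⟩ := monotone_stabilizes_iff_noetherian.mpr inferInstance f
  refine ⟨n, fun m hm => Ideal.span_le.mpr <| Set.iUnion_subset fun k => ?_⟩
  calc s k ⊆ Ideal.span (s (max k n)) := (hs le_sup_left).trans Ideal.subset_span
    _ = Ideal.span (s m) := congrArg SetLike.coe ((hn _ le_sup_right).symm.trans (hn m hm))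

theorem Ideal.exists_bound_span_iUnion {R : Type*} [CommRing R] [IsNoetherianRing R]
    (B : ℤ → Set R) : ∃ D : ℕ,
    (∀ n : ℤ, 0 < n → B n ⊆ Ideal.span (⋃ m ∈ Set.Ioc 0 (D : ℤ), B m)) ∧
    (∀ n : ℤ, n < 0 → B n ⊆ Ideal.span (⋃ m ∈ Set.Ico (-D : ℤ) 0, B m)) := by
  obtain ⟨Dpos, hDpos⟩ := Ideal.exists_span_iUnion_le_of_monotone
    (s := fun D : ℕ => ⋃ m ∈ Set.Ioc 0 (D : ℤ), B m)
    fun _ _ h => Set.biUnion_subset_biUnion_left (Set.Ioc_subset_Ioc_right (by exact_mod_cast h))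
  obtain ⟨Dneg, hDneg⟩ := Ideal.exists_span_iUnion_le_of_monotone
    (s := fun D : ℕ => ⋃ m ∈ Set.Ico (-D : ℤ) 0, B m)
    fun _ _ h => Set.biUnion_subset_biUnion_left (Set.Ico_subset_Ico_left (by simpa using h))
  refine ⟨max Dpos Dneg, fun n hn a ha => ?_, fun n hn a ha => ?_⟩
  · exact hDpos _ (le_max_left _ _) <| Ideal.subset_span <|
      Set.mem_iUnion.mpr ⟨n.toNat, Set.mem_biUnion (Set.mem_Ioc.mpr ⟨hn, by omega⟩) ha⟩
  · exact hDneg _ (le_max_right _ _) <| Ideal.subset_span <|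
      Set.mem_iUnion.mpr ⟨n.natAbs, Set.mem_biUnion (Set.mem_Ico.mpr ⟨by omega, hn⟩) ha⟩

theorem GradedRing.mem_of_mem_span_homogeneous {ι R σ : Type*} [AddCommGroup ι] [DecidableEq ι]
    [CommSemiring R] [SetLike σ R] [AddSubmonoidClass σ R] (ℬ : ι → σ) [GradedRing ℬ]
    {S : Subsemiring R} {s : Set R} {n : ι} {a : R} (ha : a ∈ ℬ n) (has : a ∈ Ideal.span s)
    (hs : ∀ x ∈ s, x ∈ S ∧ ∃ m, x ∈ ℬ m ∧ (ℬ (n - m) : Set R) ⊆ S) : a ∈ S := by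
  obtain ⟨c, hc, rfl⟩ := Submodule.mem_span_set.mp has
  rw [← DirectSum.decompose_of_mem_same ℬ ha, ← GradedRing.proj_apply, Finsupp.sum, map_sum]
  refine sum_mem fun x hx => ?_
  obtain ⟨hxS, m, hxm, hS⟩ := hs x (hc hx)
  rw [smul_eq_mul, GradedRing.proj_apply, ← sub_add_cancel n m,
    DirectSum.coe_decompose_mul_add_of_right_mem ℬ hxm]
  exact mul_mem (hS (SetLike.coe_mem _)) hxS

theorem grade_subset_of_forall_natAbs_le {S : Subsemiring A} {D : ℕ}
    (hsmall : ∀ m : ℤ, m.natAbs ≤ D → (𝒜 m : Set A) ⊆ S)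
    (hpos : ∀ n : ℤ, 0 < n →
      (𝒜 n : Set A) ⊆ Ideal.span (⋃ m ∈ Set.Ioc 0 (D : ℤ), (𝒜 m : Set A)))
    (hneg : ∀ n : ℤ, n < 0 →
      (𝒜 n : Set A) ⊆ Ideal.span (⋃ m ∈ Set.Ico (-D : ℤ) 0, (𝒜 m : Set A)))
    (n : ℤ) : (𝒜 n : Set A) ⊆ S := by
  intro a ha
  rcases le_or_gt n.natAbs D with hn | hn
  · exact hsmall n hn ha
  rcases lt_or_gt_of_ne (show n ≠ 0 by omega) with hn0 | hn0
  · refine GradedRing.mem_of_mem_span_homogeneous 𝒜 ha (hneg n hn0 ha) ?_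
    simp only [Set.mem_iUnion, Set.mem_Ico]
    rintro x ⟨m, ⟨hm, hm0⟩, hx⟩
    exact ⟨hsmall m (by omega) hx, m, hx,
      grade_subset_of_forall_natAbs_le hsmall hpos hneg (n - m)⟩
  · refine GradedRing.mem_of_mem_span_homogeneous 𝒜 ha (hpos n hn0 ha) ?_
    simp only [Set.mem_iUnion, Set.mem_Ioc]
    rintro x ⟨m, ⟨hm0, hm⟩, hx⟩
    exact ⟨hsmall m (by omega) hx, m, hx,
      grade_subset_of_forall_natAbs_le hsmall hpos hneg (n - m)⟩
termination_by n.natAbs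

/-- Goto–Yamagishi for `L = ℤ`: a noetherian `ℤ`-graded commutative ring is a finitely
generated algebra over its degree-zero subring. -/
theorem zGraded_noetherian_finiteType [IsNoetherianRing A] :
    Algebra.FiniteType (𝒜 0) A := by
  classical
  obtain ⟨D, hpos, hneg⟩ := Ideal.exists_bound_span_iUnion (fun m => (𝒜 m : Set A))
  choose t ht_sub ht_span using fun m : ℤ =>
    (Submodule.fg_span_iff_fg_span_finset_subset (R := A) (𝒜 m : Set A)).mp
      (IsNoetherian.noetherian _)
  let T : Finset A := (Finset.Icc (-D : ℤ) D).biUnion t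
  let S := Algebra.adjoin (𝒜 0) (T : Set A)
  have hsmall : ∀ m : ℤ, m.natAbs ≤ D → (𝒜 m : Set A) ⊆ S.toSubsemiring := by
    intro m hm b hb
    refine GradedRing.mem_of_mem_span_homogeneous 𝒜 hb
      ((ht_span m).le (Submodule.subset_span hb)) fun x hx => ⟨?_, m, ht_sub m hx, ?_⟩
    · exact Algebra.subset_adjoin <|
        Finset.mem_biUnion.mpr ⟨m, Finset.mem_Icc.mpr (by omega), hx⟩
    · rw [sub_self]
      exact fun c hc => S.algebraMap_mem ⟨c, hc⟩
  have hgrade := grade_subset_of_forall_natAbs_le 𝒜 hsmall hpos hneg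
  refine ⟨⟨T, Algebra.eq_top_iff.mpr fun a => ?_⟩⟩
  induction a using DirectSum.Decomposition.inductionOn 𝒜 with
  | zero => exact zero_mem S
  | homogeneous b => exact hgrade _ b.2
  | add a a' ha ha' => exact add_mem ha ha'
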